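/- A graph U contains no induced subgraph isomorphic to the claw K_{1,3} and no triangle K_3 if and only if every connected component of U is a cycle of length at least 4, a path, or an isolated vertex. -/

import Mathlib

open SimpleGraph

/-- The claw `K_{1,3}`: vertex 0 joined to each of the pairwise
    nonadjacent vertices 1, 2, 3. -/
def claw : SimpleGraph (Fin 4) := SimpleGraph.fromRel (fun a _ => a = 0)

/-- A graph is claw-free if it has no induced subgraph isomorphic to `K_{1,3}`. -/
def ClawFree {V : Type*} (G : SimpleGraph V) : Prop := IsEmpty (claw ↪g G)

/-- Every connected component of `G` is a cycle of length at least 4, a path,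
    or an isolated vertex. -/
def ComponentsCyclePath {V : Type*} (G : SimpleGraph V) : Prop :=
  ∀ c : G.ConnectedComponent,
    (∃ n, 4 ≤ n ∧ Nonempty (G.induce c.supp ≃g cycleGraph n)) ∨
    (∃ n, 1 ≤ n ∧ Nonempty (G.induce c.supp ≃g pathGraph n))

/-!
Being claw-free and triangle-free means exactly that every vertex has at most two neighbours:
three neighbours of a vertex are pairwise non-adjacent in a triangle-free graph, hence span a
claw. In a finite connected graph of maximum degree two, a longest path cannot be extended at
its ends and its inner vertices have no neighbours off it, so it visits every vertex; the only
edge it can miss joins its two ends. The graph is therefore a path or a cycle, of length at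
least 4 since triangles are excluded. Claws and triangles are connected, so both conditions
can be checked one component at a time.
-/

lemma Fin.val_sub_eq_one_iff {n : ℕ} (hn : 2 ≤ n) {a b : Fin n} :
    (a - b).val = 1 ↔ a.val = b.val + 1 ∨ (a.val = 0 ∧ b.val = n - 1) := by
  have := b.isLt
  rcases le_or_gt b a with h | h
  · rw [Fin.coe_sub_iff_le.2 h]; omega
  · rw [Fin.coe_sub_iff_lt.2 h]; omega

lemma claw_adj {i j : Fin 4} : claw.Adj i j ↔ i ≠ j ∧ (i = 0 ∨ j = 0) := by
  simp [claw, fromRel_adj]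

lemma claw_connected : claw.Connected := by
  have hreach (i : Fin 4) : claw.Reachable 0 i := by
    rcases eq_or_ne i 0 with rfl | hi
    · rfl
    · exact (claw_adj.2 ⟨hi.symm, .inl rfl⟩).reachable
  exact ⟨fun i j => (hreach i).symm.trans (hreach j)⟩

lemma ClawFree.comap {V W : Type*} {G : SimpleGraph V} {H : SimpleGraph W} (f : H ↪g G)
    (h : ClawFree G) : ClawFree H :=
  ⟨fun e => h.false (f.comp e)⟩

namespace SimpleGraph

variable {V W : Type*} {G : SimpleGraph V} {H : SimpleGraph W}

lemma cliqueFree_iff_isEmpty_embedding {n : ℕ} :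
    G.CliqueFree n ↔ IsEmpty (completeGraph (Fin n) ↪g G) :=
  ⟨fun h => ⟨fun f => f.isContained.not_cliqueFree h⟩,
    fun h => by_contra fun hn => h.false (topEmbeddingOfNotCliqueFree hn)⟩

lemma Embedding.exists_induce_supp (hH : H.Connected) (f : H ↪g G) :
    ∃ c : G.ConnectedComponent, Nonempty (H ↪g G.induce c.supp) := by
  obtain ⟨w⟩ := hH.nonempty
  have hmem (x : W) : f x ∈ (G.connectedComponentMk (f w)).supp :=
    ConnectedComponent.sound ((hH.preconnected w x).map f.toHom).symm
  refine ⟨_, ⟨⟨⟨fun x => ⟨f x, hmem x⟩, fun x y h => f.injective (congrArg Subtype.val h)⟩, ?_⟩⟩⟩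
  intro x y
  exact f.map_rel_iff

lemma isEmpty_embedding_iff_forall_induce_supp (hH : H.Connected) :
    IsEmpty (H ↪g G) ↔ ∀ c : G.ConnectedComponent, IsEmpty (H ↪g G.induce c.supp) := by
  refine ⟨fun h c => ⟨fun f => h.false ((Embedding.induce c.supp).comp f)⟩, fun h => ⟨fun f => ?_⟩⟩
  obtain ⟨c, ⟨f'⟩⟩ := f.exists_induce_supp hH
  exact (h c).false f'

/-- Maximum degree at most two, phrased without any finiteness of neighbourhoods. -/
def AtMostTwoNeighbors (G : SimpleGraph V) : Prop :=
  ∀ ⦃v a b c : V⦄, G.Adj v a → G.Adj v b → G.Adj v c → a = b ∨ a = c ∨ b = c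

lemma AtMostTwoNeighbors.clawFree (hG : G.AtMostTwoNeighbors) : ClawFree G := by
  refine ⟨fun e => ?_⟩
  have hadj (i : Fin 4) (hi : i ≠ 0) : G.Adj (e 0) (e i) :=
    e.map_rel_iff.2 (claw_adj.2 ⟨hi.symm, .inl rfl⟩)
  rcases hG (hadj 1 (by decide)) (hadj 2 (by decide)) (hadj 3 (by decide)) with h | h | h <;>
    simp [e.injective.eq_iff] at h

lemma AtMostTwoNeighbors.of_clawFree (h₁ : ClawFree G) (h₂ : G.CliqueFree 3) :
    G.AtMostTwoNeighbors := by
  classical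
  intro v a b c hva hvb hvc
  by_contra! hne
  obtain ⟨hab, hac, hbc⟩ := hne
  have hnadj {x y : V} (hx : G.Adj v x) (hy : G.Adj v y) : ¬G.Adj x y := fun hxy =>
    h₂ {v, x, y} (is3Clique_triple_iff.2 ⟨hx, hy, hxy⟩)
  have := hnadj hva hvb
  have := hnadj hva hvc
  have := hnadj hvb hvc
  have hinj : Function.Injective ![v, a, b, c] := by
    intro i j hij
    fin_cases i <;> fin_cases j <;> simp_all [hva.ne', hvb.ne', hvc.ne']
  refine h₁.false ⟨⟨![v, a, b, c], hinj⟩, fun {i j} => ?_⟩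
  fin_cases i <;> fin_cases j <;> simp_all [claw_adj, G.adj_comm]

lemma cycleGraph_adj_iff_val {n : ℕ} (hn : 2 ≤ n) {u v : Fin n} :
    (cycleGraph n).Adj u v ↔ u.val + 1 = v.val ∨ v.val + 1 = u.val ∨
      (u.val = 0 ∧ v.val = n - 1) ∨ (v.val = 0 ∧ u.val = n - 1) := by
  rw [cycleGraph_adj', Fin.val_sub_eq_one_iff hn, Fin.val_sub_eq_one_iff hn]
  omega

lemma atMostTwoNeighbors_cycleGraph (n : ℕ) : (cycleGraph n).AtMostTwoNeighbors := by
  match n with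
  | 0 => exact fun v => v.elim0
  | 1 => exact fun _ _ _ _ h => (cycleGraph_one_adj h).elim
  | n + 2 =>
    have hnbr {v x : Fin (n + 2)} (hx : (cycleGraph (n + 2)).Adj v x) : x = v - 1 ∨ x = v + 1 := by
      simpa [cycleGraph_neighborSet] using (show x ∈ (cycleGraph (n + 2)).neighborSet v from hx)
    intro v a b c ha hb hc
    rcases hnbr ha with rfl | rfl <;> rcases hnbr hb with rfl | rfl <;>
      rcases hnbr hc with rfl | rfl <;> simp

lemma cliqueFree_three_cycleGraph {n : ℕ} (hn : 4 ≤ n) : (cycleGraph n).CliqueFree 3 := by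
  intro t ht
  obtain ⟨a, b, c, hab, hac, hbc, rfl⟩ := is3Clique_iff.1 ht
  rw [cycleGraph_adj_iff_val (by omega)] at hab hac hbc
  omega

lemma atMostTwoNeighbors_pathGraph (n : ℕ) : (pathGraph n).AtMostTwoNeighbors := by
  intro v a b c ha hb hc
  rw [pathGraph_adj] at ha hb hc
  simp only [Fin.ext_iff]
  omega

lemma cliqueFree_three_pathGraph (n : ℕ) : (pathGraph n).CliqueFree 3 := by
  intro t ht
  obtain ⟨a, b, c, hab, hac, hbc, rfl⟩ := is3Clique_iff.1 ht
  rw [pathGraph_adj] at hab hac hbc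
  omega

lemma exists_isPath_forall_length_le [Finite V] [Nonempty V] (G : SimpleGraph V) :
    ∃ (u w : V) (p : G.Walk u w), p.IsPath ∧
      ∀ (a b : V) (q : G.Walk a b), q.IsPath → q.length ≤ p.length := by
  have := Fintype.ofFinite V
  let lengths : Set ℕ := {k | ∃ (a b : V) (q : G.Walk a b), q.IsPath ∧ q.length = k}
  have hbdd : BddAbove lengths :=
    ⟨Fintype.card V, by rintro _ ⟨a, b, q, hq, rfl⟩; exact hq.length_lt.le⟩
  obtain ⟨v⟩ := ‹Nonempty V›
  obtain ⟨u, w, p, hp, hlen⟩ :=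
    Nat.sSup_mem (s := lengths) ⟨0, v, v, Walk.nil, Walk.IsPath.nil, rfl⟩ hbdd
  exact ⟨u, w, p, hp, fun a b q hq => hlen ▸ le_csSup hbdd ⟨a, b, q, hq, rfl⟩⟩

namespace Walk

variable {u w : V} {p : G.Walk u w}

lemma IsPath.mem_support_of_adj_start (hp : p.IsPath)
    (hmax : ∀ (a b : V) (q : G.Walk a b), q.IsPath → q.length ≤ p.length)
    {x : V} (hx : G.Adj x u) : x ∈ p.support := by
  by_contra hxp
  have := hmax _ _ (cons hx p) ((cons_isPath_iff hx p).2 ⟨hp, hxp⟩)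
  simp at this

lemma IsPath.mem_support_of_adj_end (hp : p.IsPath)
    (hmax : ∀ (a b : V) (q : G.Walk a b), q.IsPath → q.length ≤ p.length)
    {x : V} (hx : G.Adj x w) : x ∈ p.support := by
  simpa using hp.reverse.mem_support_of_adj_start (by simpa using hmax) hx

end Walk

namespace AtMostTwoNeighbors

variable {u w : V} {p : G.Walk u w}

lemma eq_getVert_of_adj (hG : G.AtMostTwoNeighbors) (hp : p.IsPath) {i : ℕ}
    (hi₀ : 0 < i) (hi : i < p.length) {x : V} (hx : G.Adj (p.getVert i) x) :
    x = p.getVert (i - 1) ∨ x = p.getVert (i + 1) := by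
  have hprev : G.Adj (p.getVert i) (p.getVert (i - 1)) := by
    simpa [Nat.sub_add_cancel hi₀] using (p.adj_getVert_succ (i := i - 1) (by omega)).symm
  rcases hG hx hprev (p.adj_getVert_succ hi) with h | h | h
  · exact .inl h
  · exact .inr h
  · exact absurd (hp.getVert_injOn (show i - 1 ≤ p.length by omega)
      (show i + 1 ≤ p.length by omega) h) (by omega)

lemma adj_getVert_iff_of_lt (hG : G.AtMostTwoNeighbors) (hp : p.IsPath) {i j : ℕ}
    (hij : i < j) (hj : j ≤ p.length) :
    G.Adj (p.getVert i) (p.getVert j) ↔ j = i + 1 ∨ (i = 0 ∧ j = p.length ∧ G.Adj u w) := by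
  have hinj {k l : ℕ} (hk : k ≤ p.length) (hl : l ≤ p.length) (h : p.getVert k = p.getVert l) :
      k = l :=
    hp.getVert_injOn hk hl h
  refine ⟨fun hadj => ?_, ?_⟩
  · rcases Nat.eq_zero_or_pos i with rfl | hi₀
    · rcases eq_or_lt_of_le hj with rfl | hj'
      · exact .inr ⟨rfl, rfl, by simpa using hadj⟩
      · rcases hG.eq_getVert_of_adj hp hij hj' hadj.symm with h | h
        · exact .inl (by have := hinj (by omega) (by omega) h; omega)
        · exact absurd (hinj (by omega) (by omega) h) (by omega)
    · rcases hG.eq_getVert_of_adj hp hi₀ (by omega) hadj with h | h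
      · exact absurd (hinj hj (by omega) h) (by omega)
      · exact .inl (hinj hj (by omega) h)
  · rintro (rfl | ⟨rfl, rfl, h⟩)
    · exact p.adj_getVert_succ (by omega)
    · simpa using h

lemma adj_getVert_iff (hG : G.AtMostTwoNeighbors) (hp : p.IsPath) {i j : ℕ}
    (hi : i ≤ p.length) (hj : j ≤ p.length) :
    G.Adj (p.getVert i) (p.getVert j) ↔
      i + 1 = j ∨ j + 1 = i ∨ (G.Adj u w ∧ (i = 0 ∧ j = p.length ∨ j = 0 ∧ i = p.length)) := by
  rcases lt_trichotomy i j with hij | rfl | hij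
  · rw [hG.adj_getVert_iff_of_lt hp hij hj]
    by_cases hA : G.Adj u w <;>
      simp only [hA, true_and, and_true, false_and, and_false, or_false] <;> omega
  · simp only [G.irrefl, false_iff]
    rintro (h | h | ⟨hA, h⟩)
    · omega
    · omega
    · exact hA.ne (p.eq_of_length_eq_zero (by omega))
  · rw [G.adj_comm, hG.adj_getVert_iff_of_lt hp hij hi]
    by_cases hA : G.Adj u w <;>
      simp only [hA, true_and, and_true, false_and, and_false, or_false] <;> omega

lemma forall_mem_support_of_forall_length_le (hG : G.AtMostTwoNeighbors)
    (hconn : G.Preconnected) (hp : p.IsPath)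
    (hmax : ∀ (a b : V) (q : G.Walk a b), q.IsPath → q.length ≤ p.length) (x : V) :
    x ∈ p.support := by
  have hclosed {y z : V} (hyz : G.Adj y z) (hy : y ∈ p.support) : z ∈ p.support := by
    obtain ⟨i, rfl, hi⟩ := Walk.mem_support_iff_exists_getVert.1 hy
    rcases Nat.eq_zero_or_pos i with rfl | hi₀
    · exact hp.mem_support_of_adj_start hmax (by simpa using hyz.symm)
    rcases eq_or_lt_of_le hi with rfl | hi'
    · exact hp.mem_support_of_adj_end hmax (by simpa using hyz.symm)
    rcases hG.eq_getVert_of_adj hp hi₀ hi' hyz with rfl | rfl <;> exact p.getVert_mem_support _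
  by_contra hx
  obtain ⟨d, -, hd, hd'⟩ :=
    (hconn u x).some.exists_boundary_dart {y | y ∈ p.support} p.start_mem_support hx
  exact hd' (hclosed d.adj hd)

lemma exists_iso_of_forall_mem_support (hG : G.AtMostTwoNeighbors) (hp : p.IsPath)
    (hspan : ∀ x, x ∈ p.support) :
    (∃ n, 3 ≤ n ∧ Nonempty (G ≃g cycleGraph n)) ∨
      (∃ n, 1 ≤ n ∧ Nonempty (G ≃g pathGraph n)) := by
  have hbij : Function.Bijective (fun i : Fin (p.length + 1) => p.getVert i) := by
    refine ⟨fun i j h => Fin.ext (hp.getVert_injOn (by simp; omega) (by simp; omega) h),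
      fun x => ?_⟩
    obtain ⟨i, hi, hiN⟩ := Walk.mem_support_iff_exists_getVert.1 (hspan x)
    exact ⟨⟨i, by omega⟩, hi⟩
  let e := Equiv.ofBijective _ hbij
  have hadj (i j : Fin (p.length + 1)) : G.Adj (e i) (e j) ↔
      i.val + 1 = j.val ∨ j.val + 1 = i.val ∨
        (G.Adj u w ∧ (i.val = 0 ∧ j.val = p.length ∨ j.val = 0 ∧ i.val = p.length)) :=
    hG.adj_getVert_iff hp (by omega) (by omega)
  by_cases hcycle : G.Adj u w ∧ 2 ≤ p.length
  · refine .inl ⟨p.length + 1, by omega, ⟨Iso.symm ⟨e, fun {i j} => ?_⟩⟩⟩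
    rw [hadj, cycleGraph_adj_iff_val (by omega)]
    simp only [hcycle.1, true_and]
    omega
  · have hshort : G.Adj u w → p.length = 1 := fun h => by
      have := mt p.eq_of_length_eq_zero h.ne
      have : ¬2 ≤ p.length := fun h2 => hcycle ⟨h, h2⟩
      omega
    refine .inr ⟨p.length + 1, by omega, ⟨Iso.symm ⟨e, fun {i j} => ?_⟩⟩⟩
    rw [hadj, pathGraph_adj]
    by_cases hA : G.Adj u w
    · have := hshort hA
      simp only [hA, true_and]
      omega
    · simp only [hA, false_and, or_false]

theorem exists_iso_cycleGraph_or_pathGraph [Finite V] (hG : G.AtMostTwoNeighbors)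
    (hconn : G.Connected) :
    (∃ n, 3 ≤ n ∧ Nonempty (G ≃g cycleGraph n)) ∨
      (∃ n, 1 ≤ n ∧ Nonempty (G ≃g pathGraph n)) := by
  have := hconn.nonempty
  obtain ⟨u, w, p, hp, hmax⟩ := G.exists_isPath_forall_length_le
  exact hG.exists_iso_of_forall_mem_support hp
    (hG.forall_mem_support_of_forall_length_le hconn.preconnected hp hmax)

end AtMostTwoNeighbors

theorem Connected.clawFree_and_cliqueFree_three_iff [Finite V] (hconn : G.Connected) :
    ClawFree G ∧ G.CliqueFree 3 ↔
      (∃ n, 4 ≤ n ∧ Nonempty (G ≃g cycleGraph n)) ∨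
        (∃ n, 1 ≤ n ∧ Nonempty (G ≃g pathGraph n)) := by
  constructor
  · rintro ⟨hclaw, htri⟩
    rcases (AtMostTwoNeighbors.of_clawFree hclaw htri).exists_iso_cycleGraph_or_pathGraph hconn
      with ⟨n, hn, ⟨φ⟩⟩ | hpath
    · refine .inl ⟨n, ?_, ⟨φ⟩⟩
      rcases eq_or_lt_of_le hn with rfl | hn
      · have htri₃ := htri.comap φ.symm.toEmbedding.isContained
        rw [cycleGraph_three_eq_top] at htri₃
        exact absurd htri₃ (IsContained.refl _).not_cliqueFree
      · exact hn
    · exact .inr hpath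
  · rintro (⟨n, hn, ⟨φ⟩⟩ | ⟨n, -, ⟨φ⟩⟩)
    · exact ⟨(atMostTwoNeighbors_cycleGraph n).clawFree.comap φ.toEmbedding,
        (cliqueFree_three_cycleGraph hn).comap φ.toEmbedding.isContained⟩
    · exact ⟨(atMostTwoNeighbors_pathGraph n).clawFree.comap φ.toEmbedding,
        (cliqueFree_three_pathGraph n).comap φ.toEmbedding.isContained⟩

end SimpleGraph

/-- A graph `U` is claw-free and triangle-free iff every connected component of
    `U` is a cycle of length at least 4, a path, or an isolated vertex. -/
theorem clawFree_triangleFree_iff_components {V : Type*} [Fintype V]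
    (U : SimpleGraph V) :
    (ClawFree U ∧ U.CliqueFree 3) ↔ ComponentsCyclePath U := by
  rw [ClawFree, cliqueFree_iff_isEmpty_embedding,
    isEmpty_embedding_iff_forall_induce_supp claw_connected,
    isEmpty_embedding_iff_forall_induce_supp connected_top, ← forall_and]
  refine forall_congr' fun c => ?_
  rw [← cliqueFree_iff_isEmpty_embedding]
  exact c.connected_toSimpleGraph.clawFree_and_cliqueFree_three_iff
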